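/- If a ring R is inner McCoy and n ≥ 2, then DUT_2(R) (2×2 upper triangular matrices with equal diagonal entries) is inner McCoy. -/

import Mathlib

def IsInnerMcCoy (S : Type*) [Ring S] : Prop :=
  ∀ f g : Polynomial S, f ≠ 0 → g ≠ 0 → f * g * f = 0 →
    ∃ r : S, r ≠ 0 ∧ f * Polynomial.C r * f = 0

/-- The subring of upper triangular `n × n` matrices over `R` with constant diagonal. -/
def DUT (R : Type*) [Ring R] (n : ℕ) : Subring (Matrix (Fin n) (Fin n) R) where
  carrier := {M | (∀ i j : Fin n, j < i → M i j = 0) ∧ ∀ i j : Fin n, M i i = M j j}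
  zero_mem' := ⟨fun _ _ _ => rfl, fun _ _ => rfl⟩
  one_mem' := ⟨fun _ _ h => Matrix.one_apply_ne (ne_of_lt h).symm,
    fun i j => by rw [Matrix.one_apply_eq, Matrix.one_apply_eq]⟩
  add_mem' := by
    rintro A B ⟨hA1, hA2⟩ ⟨hB1, hB2⟩
    refine ⟨fun i j hij => by simp [Matrix.add_apply, hA1 i j hij, hB1 i j hij],
      fun i j => by simp [Matrix.add_apply, hA2 i j, hB2 i j]⟩
  neg_mem' := by
    rintro A ⟨hA1, hA2⟩
    exact ⟨fun i j hij => by simp [Matrix.neg_apply, hA1 i j hij],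
      fun i j => by simp [Matrix.neg_apply, hA2 i j]⟩
  mul_mem' := by
    rintro A B ⟨hA1, hA2⟩ ⟨hB1, hB2⟩
    constructor
    · intro i j hij
      rw [Matrix.mul_apply]
      apply Finset.sum_eq_zero
      intro k _
      rcases lt_or_ge k i with hk | hk
      · rw [hA1 i k hk, zero_mul]
      · rw [hB1 k j (lt_of_lt_of_le hij hk), mul_zero]
    · intro i j
      have key : ∀ m : Fin n, (A * B) m m = A m m * B m m := by
        intro m
        rw [Matrix.mul_apply]
        apply Finset.sum_eq_single
        · intro k _ hk
          rcases lt_or_gt_of_ne hk with h | h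
          · rw [hA1 m k h, zero_mul]
          · rw [hB1 k m h, mul_zero]
        · intro h
          exact absurd (Finset.mem_univ m) h
      rw [key i, key j, hA2 i j, hB2 i j]

/-!
Write the elements of `DUT R 2` as `a + bε` with `ε = E₀₁`; then `ε` is central and
`(a + bε)ε = aε`. Hence `F (qε) F = (f q f) ε` for every `F` with diagonal part `f` and every
`q : R[X]`. If `f = 0`, the constant `ε` works. Otherwise we find `q ≠ 0` with `f q f = 0`: the
diagonal part `g` of `G` if it is nonzero, and if `g = 0` then `G = qε` and `(f q f) ε = FGF = 0`.
Inner McCoy for `R` then gives `r ≠ 0` with `f r f = 0`, and `A = rε` works.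
-/

namespace DUT

open Polynomial

variable {R : Type*} [Ring R]

local notation "M₂" => Matrix (Fin 2) (Fin 2) R

lemma val_one_zero (M : DUT R 2) : M.val 1 0 = 0 := M.2.1 1 0 Fin.zero_lt_one

lemma val_one_one (M : DUT R 2) : M.val 1 1 = M.val 0 0 := M.2.2 1 0

def diag : DUT R 2 →+* R where
  toFun M := M.val 0 0
  map_one' := Matrix.one_apply_eq 0
  map_mul' A B := by
    change (A.val * B.val : M₂) 0 0 = _
    simp [Matrix.mul_apply, Fin.sum_univ_two, val_one_zero]
  map_zero' := rfl
  map_add' _ _ := rfl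

def scalar : R →+* DUT R 2 :=
  (Matrix.scalar (Fin 2) : R →+* M₂).codRestrict (DUT R 2) fun _ =>
    ⟨fun _ _ hij => Matrix.diagonal_apply_ne _ hij.ne', fun _ _ => by simp⟩

def ε : DUT R 2 :=
  ⟨!![0, 1; 0, 0], fun i j hij => by fin_cases i <;> fin_cases j <;> simp_all,
    fun i j => by fin_cases i <;> fin_cases j <;> simp⟩

@[simp]
lemma diag_apply (M : DUT R 2) : diag M = M.val 0 0 := rfl

@[simp]
lemma val_scalar (r : R) : (scalar r).val = Matrix.scalar (Fin 2) r := rfl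

@[simp]
lemma val_ε : (ε : DUT R 2).val = !![0, 1; 0, 0] := rfl

lemma diag_comp_scalar : (diag : DUT R 2 →+* R).comp scalar = RingHom.id R := by
  ext; simp

lemma val_scalar_mul_ε (r : R) : (scalar r * ε).val = !![0, r; 0, 0] := by
  change Matrix.scalar (Fin 2) r * ε.val = _
  ext i j
  fin_cases i <;> fin_cases j <;> simp

lemma scalar_mul_ε_eq_zero_iff {r : R} : scalar r * ε = 0 ↔ r = 0 := by
  refine ⟨fun h => ?_, fun h => by rw [h, map_zero, zero_mul]⟩
  simpa [val_scalar_mul_ε] using congrArg (fun M : DUT R 2 => M.val 0 1) h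

lemma eq_scalar_diag_add_scalar_mul_ε (M : DUT R 2) :
    M = scalar (diag M) + scalar (M.val 0 1) * ε := by
  ext i j
  rw [Subring.coe_add, val_scalar_mul_ε]
  fin_cases i <;> fin_cases j <;> simp [val_one_zero, val_one_one]

lemma mul_ε (M : DUT R 2) : M * ε = scalar (diag M) * ε := by
  ext i j
  rw [val_scalar_mul_ε]
  change (M.val * ε.val : M₂) i j = _
  fin_cases i <;> fin_cases j <;> simp [Matrix.mul_apply, val_one_zero]

lemma commute_ε (M : DUT R 2) : Commute ε M := by
  ext i j
  change (ε.val * M.val : M₂) i j = (M.val * ε.val : M₂) i j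
  fin_cases i <;> fin_cases j <;> simp [Matrix.mul_apply, val_one_zero, val_one_one]

lemma commute_C_ε (P : (DUT R 2)[X]) : Commute (C ε) P := by
  ext n
  rw [coeff_C_mul, coeff_mul_C, (commute_ε _).eq]

lemma mul_C_ε (P : (DUT R 2)[X]) : P * C ε = (P.map diag).map scalar * C ε := by
  ext1 n
  rw [coeff_mul_C, coeff_mul_C, coeff_map, coeff_map, mul_ε]

lemma map_scalar_mul_C_ε_eq_zero_iff {q : R[X]} : q.map scalar * C ε = 0 ↔ q = 0 := by
  simp only [Polynomial.ext_iff, coeff_mul_C, coeff_map, coeff_zero, scalar_mul_ε_eq_zero_iff]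

lemma exists_eq_map_diag_add_map_scalar_mul_C_ε (G : (DUT R 2)[X]) :
    ∃ q : R[X], G = (G.map diag).map scalar + q.map scalar * C ε := by
  induction G using Polynomial.induction_on' with
  | add P Q hP hQ =>
    obtain ⟨p, hp⟩ := hP
    obtain ⟨q, hq⟩ := hQ
    refine ⟨p + q, ?_⟩
    rw [Polynomial.map_add, Polynomial.map_add, Polynomial.map_add, add_mul]
    nth_rw 1 [hp, hq]
    abel
  | monomial n M =>
    refine ⟨monomial n (M.val 0 1), ?_⟩
    rw [map_monomial, map_monomial, map_monomial, monomial_mul_C, ← map_add,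
      ← eq_scalar_diag_add_scalar_mul_ε]

lemma mul_map_scalar_mul_C_ε_mul (F : (DUT R 2)[X]) (q : R[X]) :
    F * (q.map scalar * C ε) * F =
      (F.map diag * q * F.map diag).map scalar * C ε := by
  have hq : (q.map scalar).map diag = q := by
    rw [Polynomial.map_map, diag_comp_scalar, Polynomial.map_id]
  rw [← mul_assoc, mul_assoc, commute_C_ε, ← mul_assoc, mul_C_ε]
  simp only [Polynomial.map_mul, hq]

end DUT

open Polynomial DUT

theorem dut2_innerMcCoy_general (R : Type*) [Ring R] (h : IsInnerMcCoy R) :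
    IsInnerMcCoy (DUT R 2) := by
  intro F G hF hG hFGF
  set f := F.map diag
  suffices ∃ r : R, r ≠ 0 ∧ f * C r * f = 0 by
    obtain ⟨r, hr, hfrf⟩ := this
    refine ⟨scalar r * ε, mt scalar_mul_ε_eq_zero_iff.1 hr, ?_⟩
    rw [C_mul, ← map_C, mul_map_scalar_mul_C_ε_mul, hfrf, Polynomial.map_zero, zero_mul]
  by_cases hf : f = 0
  · have : Nontrivial R := by
      by_contra hR
      rw [not_nontrivial_iff_subsingleton] at hR
      exact hF (Subsingleton.elim _ _)
    exact ⟨1, one_ne_zero, by rw [hf, mul_zero]⟩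
  obtain ⟨q, hq, hfqf⟩ : ∃ q : R[X], q ≠ 0 ∧ f * q * f = 0 := by
    by_cases hg : G.map diag = 0
    · obtain ⟨q, hGq⟩ := exists_eq_map_diag_add_map_scalar_mul_C_ε G
      rw [hg, Polynomial.map_zero, zero_add] at hGq
      refine ⟨q, fun hq => hG (by rw [hGq, hq, Polynomial.map_zero, zero_mul]), ?_⟩
      rwa [hGq, mul_map_scalar_mul_C_ε_mul, map_scalar_mul_C_ε_eq_zero_iff] at hFGF
    · refine ⟨_, hg, ?_⟩
      simpa only [Polynomial.map_mul, Polynomial.map_zero] using congrArg (map diag) hFGF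
  exact h f q hf hq hfqf

/-- If `R` is inner McCoy (and `n ≥ 2`), then `DUT₂(R)` is inner McCoy. -/
theorem dut2_innerMcCoy (R : Type*) [Ring R] (n : ℕ) (hn : 2 ≤ n) (h : IsInnerMcCoy R) :
    IsInnerMcCoy (DUT R 2) :=
  dut2_innerMcCoy_general R h
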